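/- Let φ' be a density on {-1,1}^n such that Pr_{x,y∼φ' independent}[|∑_{i=1}^n x_i y_i| > t√n] ≤ 10⁷/m₁². Then for every i = 1,...,n, the Fourier weight at level i satisfies W^i[φ'] = ∑_{|S|=i} φ̂'(S)² ≤ (10⁷/m₁²)·n^i + t^i·n^{i/2}. -/
import Mathlib


open Finset

noncomputable def sgn (b : Bool) : ℝ := if b then 1 else -1

noncomputable def chi {n : ℕ} (S : Finset (Fin n)) (x : Fin n → Bool) : ℝ :=
  ∏ i ∈ S, sgn (x i)

/-- Expectation under the uniform distribution on `{-1,1}^n`. -/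
noncomputable def expect {n : ℕ} (f : (Fin n → Bool) → ℝ) : ℝ :=
  (∑ x : Fin n → Bool, f x) / 2 ^ n

/-- Fourier coefficient `f̂(S) = E_x[f(x) x^S]`. -/
noncomputable def coeff {n : ℕ} (f : (Fin n → Bool) → ℝ) (S : Finset (Fin n)) : ℝ :=
  expect (fun x => f x * chi S x)

/-- A density function: nonnegative with mean 1 under the uniform measure. -/
def IsDensity {n : ℕ} (φ : (Fin n → Bool) → ℝ) : Prop :=
  (∀ x, 0 ≤ φ x) ∧ expect φ = 1

/-- Total variation distance between densities: `(1/2) E_x |φ - ψ|`. -/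
noncomputable def dTV {n : ℕ} (φ ψ : (Fin n → Bool) → ℝ) : ℝ :=
  expect (fun x => |φ x - ψ x|) / 2

/-- The nonempty sets of size at most `k`. -/
noncomputable def lowSets (n k : ℕ) : Finset (Finset (Fin n)) :=
  Finset.univ.filter fun S => 1 ≤ S.card ∧ S.card ≤ k

theorem stmt19 {n m₁ : ℕ} (φ' : (Fin n → Bool) → ℝ) (hφ' : IsDensity φ')
    (t : ℝ) (ht : 0 ≤ t)
    (hsk : (∑ x : Fin n → Bool, ∑ y : Fin n → Bool, φ' x * φ' y *
        (if t * Real.sqrt n < |∑ i, sgn (x i) * sgn (y i)| then 1 else 0)) /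
        (2 : ℝ) ^ (2 * n) ≤ 10 ^ 7 / (m₁ : ℝ) ^ 2) :
    ∀ i : ℕ, 1 ≤ i → i ≤ n →
      ∑ S ∈ Finset.univ.filter (fun S : Finset (Fin n) => S.card = i),
          (coeff φ' S) ^ 2 ≤
        10 ^ 7 / (m₁ : ℝ) ^ 2 * (n : ℝ) ^ i + t ^ i * Real.sqrt n ^ i := by
  classical
  obtain ⟨hpos, hmean⟩ := hφ'
  intro i hi hin
  have hn : 0 < n := lt_of_lt_of_le hi hin
  set Z : (Fin n → Bool) → (Fin n → Bool) → ℝ :=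
    fun x y => ∑ j, sgn (x j) * sgn (y j) with hZ
  have hsk' : (∑ x : Fin n → Bool, ∑ y : Fin n → Bool, φ' x * φ' y *
      (if t * Real.sqrt n < |Z x y| then 1 else 0)) / (2 : ℝ) ^ (2 * n)
      ≤ 10 ^ 7 / (m₁ : ℝ) ^ 2 := hsk
  have habs1 : ∀ b : Bool, |sgn b| = 1 := by intro b; cases b <;> simp [sgn]
  have hZabs : ∀ x y, |Z x y| ≤ (n : ℝ) := by
    intro x y
    calc |Z x y| ≤ ∑ j, |sgn (x j) * sgn (y j)| := Finset.abs_sum_le_sum_abs _ _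
      _ = ∑ _j : Fin n, (1 : ℝ) := by
          refine Finset.sum_congr rfl fun j _ => ?_
          rw [abs_mul, habs1, habs1, mul_one]
      _ = (n : ℝ) := by simp
  -- pointwise bound
  have hC : 0 ≤ t ^ i * Real.sqrt n ^ i :=
    mul_nonneg (pow_nonneg ht _) (pow_nonneg (Real.sqrt_nonneg _) _)
  have hptwise : ∀ x y, (Z x y) ^ i ≤
      (if t * Real.sqrt n < |Z x y| then 1 else 0) * (n : ℝ) ^ i
        + t ^ i * Real.sqrt n ^ i := by
    intro x y
    have h1 : (Z x y) ^ i ≤ |Z x y| ^ i := by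
      calc (Z x y) ^ i ≤ |(Z x y) ^ i| := le_abs_self _
        _ = |Z x y| ^ i := abs_pow _ _
    split_ifs with h
    · have h2 : |Z x y| ^ i ≤ (n : ℝ) ^ i :=
        pow_le_pow_left₀ (abs_nonneg _) (hZabs x y) i
      nlinarith
    · push_neg at h
      have h2 : |Z x y| ^ i ≤ (t * Real.sqrt n) ^ i :=
        pow_le_pow_left₀ (abs_nonneg _) h i
      rw [mul_pow] at h2
      have hnn : (0:ℝ) ≤ (n : ℝ) ^ i := by positivity
      nlinarith
  -- expansion of the power
  have hexp : ∀ x y, (Z x y) ^ i =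
      ∑ f : Fin i → Fin n, (∏ k, sgn (x (f k))) * (∏ k, sgn (y (f k))) := by
    intro x y
    rw [hZ]
    rw [Finset.sum_pow' (univ : Finset (Fin n)) (fun j => sgn (x j) * sgn (y j)) i]
    rw [Fintype.piFinset_univ]
    exact Finset.sum_congr rfl fun f _ => by rw [Finset.prod_mul_distrib]
  -- factorization of the double sum
  set A : (Fin i → Fin n) → ℝ :=
    fun f => (∑ x : Fin n → Bool, φ' x * ∏ k, sgn (x (f k))) / 2 ^ n with hA
  have hfact : (∑ x : Fin n → Bool, ∑ y : Fin n → Bool, φ' x * φ' y * (Z x y) ^ i)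
      / (2 : ℝ) ^ (2 * n) = ∑ f : Fin i → Fin n, A f ^ 2 := by
    have h1 : ∑ x : Fin n → Bool, ∑ y : Fin n → Bool, φ' x * φ' y * (Z x y) ^ i
        = ∑ f : Fin i → Fin n,
            (∑ x : Fin n → Bool, φ' x * ∏ k, sgn (x (f k))) *
            (∑ y : Fin n → Bool, φ' y * ∏ k, sgn (y (f k))) := by
      calc ∑ x : Fin n → Bool, ∑ y : Fin n → Bool, φ' x * φ' y * (Z x y) ^ i
          = ∑ x : Fin n → Bool, ∑ y : Fin n → Bool, ∑ f : Fin i → Fin n,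
              (φ' x * ∏ k, sgn (x (f k))) * (φ' y * ∏ k, sgn (y (f k))) := by
            refine Finset.sum_congr rfl fun x _ => Finset.sum_congr rfl fun y _ => ?_
            rw [hexp x y, Finset.mul_sum]
            exact Finset.sum_congr rfl fun f _ => by ring
        _ = ∑ x : Fin n → Bool, ∑ f : Fin i → Fin n, ∑ y : Fin n → Bool,
              (φ' x * ∏ k, sgn (x (f k))) * (φ' y * ∏ k, sgn (y (f k))) :=
            Finset.sum_congr rfl fun x _ => Finset.sum_comm
        _ = ∑ f : Fin i → Fin n, ∑ x : Fin n → Bool, ∑ y : Fin n → Bool,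
              (φ' x * ∏ k, sgn (x (f k))) * (φ' y * ∏ k, sgn (y (f k))) :=
            Finset.sum_comm
        _ = _ := Finset.sum_congr rfl fun f _ => (Finset.sum_mul_sum _ _ _ _).symm
    rw [h1, Finset.sum_div]
    refine Finset.sum_congr rfl fun f _ => ?_
    rw [hA]
    have h2 : ((2:ℝ) ^ (2 * n)) = 2 ^ n * 2 ^ n := by rw [two_mul, pow_add]
    rw [h2, pow_two, div_mul_div_comm]
  -- Step A : weight at level i is at most the sum over all functions
  set F : Finset (Fin n) → (Fin i → Fin n) :=
    fun S k => if h : S.card = i then S.orderEmbOfFin h k else ⟨0, hn⟩ with hF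
  have himg : ∀ (S : Finset (Fin n)) (h : S.card = i),
      Finset.image (F S) univ = S := by
    intro S h
    ext j
    simp only [Finset.mem_image, Finset.mem_univ, true_and]
    constructor
    · rintro ⟨k, rfl⟩
      simp only [hF, h, dif_pos]
      exact Finset.orderEmbOfFin_mem _ _ _
    · intro hj
      have hr : j ∈ Set.range (S.orderEmbOfFin h) := by
        rw [Finset.range_orderEmbOfFin]; exact hj
      obtain ⟨k, hk⟩ := hr
      exact ⟨k, by simp only [hF, h, dif_pos]; exact hk⟩
  have hchi : ∀ (S : Finset (Fin n)) (h : S.card = i) (x : Fin n → Bool),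
      (∏ k, sgn (x (F S k))) = chi S x := by
    intro S h x
    have hinj : ∀ a ∈ (univ : Finset (Fin i)), ∀ b ∈ univ, F S a = F S b → a = b := by
      intro a _ b _ hab
      simp only [hF, h, dif_pos] at hab
      exact (S.orderEmbOfFin h).injective hab
    unfold chi
    conv_rhs => rw [← himg S h]
    rw [Finset.prod_image hinj]
  have hstepA : ∑ S ∈ Finset.univ.filter (fun S : Finset (Fin n) => S.card = i),
      (coeff φ' S) ^ 2 ≤ ∑ f : Fin i → Fin n, A f ^ 2 := by
    have hinjF : ∀ S ∈ Finset.univ.filter (fun S : Finset (Fin n) => S.card = i),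
        ∀ T ∈ Finset.univ.filter (fun S : Finset (Fin n) => S.card = i),
        F S = F T → S = T := by
      intro S hS T hT hST
      have hS' : S.card = i := (Finset.mem_filter.mp hS).2
      have hT' : T.card = i := (Finset.mem_filter.mp hT).2
      rw [← himg S hS', ← himg T hT', hST]
    calc ∑ S ∈ Finset.univ.filter (fun S : Finset (Fin n) => S.card = i),
          (coeff φ' S) ^ 2
        = ∑ f ∈ (Finset.univ.filter (fun S : Finset (Fin n) => S.card = i)).image F,
            A f ^ 2 := by
          rw [Finset.sum_image hinjF]
          refine Finset.sum_congr rfl fun S hS => ?_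
          have h : S.card = i := (Finset.mem_filter.mp hS).2
          have hAF : A (F S) = coeff φ' S := by
            rw [hA]
            unfold coeff _root_.expect
            refine congrArg (· / (2:ℝ) ^ n) (Finset.sum_congr rfl fun x _ => ?_)
            show φ' x * ∏ k, sgn (x (F S k)) = φ' x * chi S x
            rw [hchi S h x]
          rw [hAF]
      _ ≤ ∑ f : Fin i → Fin n, A f ^ 2 :=
          Finset.sum_le_sum_of_subset_of_nonneg (Finset.subset_univ _)
            (fun f _ _ => sq_nonneg _)
  -- total mass is 1
  have hsum1 : (∑ x : Fin n → Bool, ∑ y : Fin n → Bool, φ' x * φ' y)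
      / (2 : ℝ) ^ (2 * n) = 1 := by
    have h1 : ∑ x : Fin n → Bool, ∑ y : Fin n → Bool, φ' x * φ' y
        = (∑ x : Fin n → Bool, φ' x) * (∑ y : Fin n → Bool, φ' y) :=
      (Finset.sum_mul_sum _ _ _ _).symm
    have h2 : (∑ x : Fin n → Bool, φ' x) = 2 ^ n := by
      unfold _root_.expect at hmean
      field_simp at hmean
      linarith
    rw [h1, h2, two_mul, pow_add]
    exact div_self (by positivity)
  -- put everything together
  calc ∑ S ∈ Finset.univ.filter (fun S : Finset (Fin n) => S.card = i),
        (coeff φ' S) ^ 2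
      ≤ ∑ f : Fin i → Fin n, A f ^ 2 := hstepA
    _ = (∑ x : Fin n → Bool, ∑ y : Fin n → Bool, φ' x * φ' y * (Z x y) ^ i)
          / (2 : ℝ) ^ (2 * n) := hfact.symm
    _ ≤ (∑ x : Fin n → Bool, ∑ y : Fin n → Bool, φ' x * φ' y *
          ((if t * Real.sqrt n < |Z x y| then 1 else 0) * (n : ℝ) ^ i
            + t ^ i * Real.sqrt n ^ i)) / (2 : ℝ) ^ (2 * n) := by
        gcongr with x _ y _
        · exact mul_nonneg (hpos x) (hpos y)
        · exact hptwise x y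
    _ = (n : ℝ) ^ i * ((∑ x : Fin n → Bool, ∑ y : Fin n → Bool, φ' x * φ' y *
          (if t * Real.sqrt n < |Z x y| then 1 else 0)) / (2 : ℝ) ^ (2 * n))
        + t ^ i * Real.sqrt n ^ i *
          ((∑ x : Fin n → Bool, ∑ y : Fin n → Bool, φ' x * φ' y)
            / (2 : ℝ) ^ (2 * n)) := by
        rw [mul_div_assoc', mul_div_assoc', ← add_div]
        congr 1
        rw [Finset.mul_sum, Finset.mul_sum, ← Finset.sum_add_distrib]
        refine Finset.sum_congr rfl fun x _ => ?_
        rw [Finset.mul_sum, Finset.mul_sum, ← Finset.sum_add_distrib]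
        exact Finset.sum_congr rfl fun y _ => by ring
    _ ≤ (n : ℝ) ^ i * (10 ^ 7 / (m₁ : ℝ) ^ 2) + t ^ i * Real.sqrt n ^ i * 1 := by
        refine add_le_add (mul_le_mul_of_nonneg_left hsk' (by positivity))
          (le_of_eq (by rw [hsum1]))
    _ = 10 ^ 7 / (m₁ : ℝ) ^ 2 * (n : ℝ) ^ i + t ^ i * Real.sqrt n ^ i := by ring
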